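/- arXiv:1910.10571 — 6 statements merged into one kernel-verified Lean document; each statement's English description precedes it below -/
import Mathlib

section
/- Let m ≥ 1 be an integer, let q and k be reals with 2 ≤ q ≤ k, let r ∈ ℝ^m have nonnegative entries, and let ν > 0 and β ≥ 1 be reals. Suppose Δ̃ ∈ ℝ^m satisfies ∑_{e=1}^m r_e Δ̃_e² + (1/2)(ν/m)^{1−q/k} ‖Δ̃‖_q^q ≤ βν. Set α = (1/(16β))·m^{−(k/(k−1))(1/q−1/k)}. Then 2∑_{e=1}^m r_e (αΔ̃_e)² + ‖αΔ̃‖_k^k ≤ αν/4. -/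
/-!
The quadratic part of the hypothesis gives `∑ rₑ Δₑ² ≤ βν`, and `α ≤ 1/(16β)` turns this into
`2α² ∑ rₑ Δₑ² ≤ αν/8`. For the `k`-norm, `‖Δ‖_k^k ≤ (‖Δ‖_q^q)^(k/q)` and the `q`-norm part of
the hypothesis give `‖Δ‖_k^k ≤ (2β)^(k/q) ν m^(k/q-1)`. The exponent of `m` in `α` is chosen so
that `α^(k-1)` cancels exactly this power of `m`, leaving `‖αΔ‖_k^k ≤ αν (2β)^(k/q) / (16β)^(k-1)`,
which is at most `αν/8` because `k/q ≤ k - 1`.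
-/

open Finset Real

lemma sum_rpow_le_rpow_sum {ι : Type*} {s : Finset ι} {f : ι → ℝ} (hf : ∀ i ∈ s, 0 ≤ f i)
    {p : ℝ} (hp : 1 ≤ p) : ∑ i ∈ s, f i ^ p ≤ (∑ i ∈ s, f i) ^ p := by
  classical
  induction s using Finset.induction_on with
  | empty => simp [zero_rpow (by linarith : p ≠ 0)]
  | insert i s hi ih =>
    have hfs : ∀ j ∈ s, 0 ≤ f j := fun j hj => hf j (mem_insert_of_mem hj)
    rw [sum_insert hi, sum_insert hi]
    calc f i ^ p + ∑ j ∈ s, f j ^ p ≤ f i ^ p + (∑ j ∈ s, f j) ^ p := by gcongr; exact ih hfs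
      _ ≤ _ := add_rpow_le_rpow_add (hf i (mem_insert_self i s)) (sum_nonneg hfs) hp

lemma sum_abs_rpow_le_rpow_sum_abs_rpow {ι : Type*} (s : Finset ι) (x : ι → ℝ) {q k : ℝ}
    (hq : 0 < q) (hqk : q ≤ k) :
    ∑ i ∈ s, |x i| ^ k ≤ (∑ i ∈ s, |x i| ^ q) ^ (k / q) :=
  calc ∑ i ∈ s, |x i| ^ k = ∑ i ∈ s, (|x i| ^ q) ^ (k / q) := by
        refine sum_congr rfl fun i _ => ?_
        rw [← rpow_mul (abs_nonneg _), mul_div_cancel₀ k hq.ne']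
    _ ≤ _ := sum_rpow_le_rpow_sum (fun i _ => by positivity) ((one_le_div hq).2 hqk)

lemma rpow_le_of_div_rpow_mul_le {Q a ν M t : ℝ} (hQ : 0 ≤ Q) (ha : 0 ≤ a) (hν : 0 < ν)
    (hM : 0 < M) (ht : 0 < t) (h : (ν / M) ^ (1 - 1 / t) * Q ≤ a * ν) :
    Q ^ t ≤ a ^ t * ν * M ^ (t - 1) := by
  have hQ' : Q ≤ a * ν * (M / ν) ^ (1 - 1 / t) := by
    rwa [← inv_div, inv_rpow (by positivity), inv_mul_le_iff₀ (by positivity), mul_comm] at h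
  calc Q ^ t ≤ (a * ν * (M / ν) ^ (1 - 1 / t)) ^ t := by gcongr
    _ = a ^ t * ν * M ^ (t - 1) := by
      rw [mul_rpow (by positivity) (by positivity), mul_rpow ha hν.le, ← rpow_mul (by positivity),
        show (1 - 1 / t) * t = t - 1 by field_simp, div_rpow hM.le hν.le, rpow_sub_one hν.ne']
      field_simp

lemma mul_rpow_le_rpow_of_one_le {b c t u : ℝ} (hb : 1 ≤ b) (hc : 1 ≤ c) (htu : t ≤ u)
    (hu : 1 ≤ u) : c * b ^ t ≤ (c * b) ^ u := by
  rw [mul_rpow (by linarith) (by linarith)]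
  gcongr
  calc c = c ^ (1 : ℝ) := (rpow_one c).symm
    _ ≤ c ^ u := rpow_le_rpow_of_exponent_le hc hu

/-- The scaling factor `α` of the paper. -/
noncomputable def approxScale (M q k β : ℝ) : ℝ :=
  1 / (16 * β) * M ^ (-(k / (k - 1)) * (1 / q - 1 / k))

lemma approxScale_nonneg {M q k β : ℝ} (hM : 0 ≤ M) (hβ : 0 ≤ β) : 0 ≤ approxScale M q k β := by
  unfold approxScale; positivity

lemma approxScale_mul_le_one {M q k β : ℝ} (hM : 1 ≤ M) (hβ : 0 < β) (hq : 1 ≤ q) (hqk : q ≤ k) :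
    approxScale M q k β * (16 * β) ≤ 1 := by
  have hexp : -(k / (k - 1)) * (1 / q - 1 / k) ≤ 0 := by
    have hk : 0 ≤ k / (k - 1) := div_nonneg (by linarith) (by linarith)
    have hqk' : 1 / k ≤ 1 / q := one_div_le_one_div_of_le (by linarith) hqk
    nlinarith
  calc approxScale M q k β * (16 * β) = M ^ (-(k / (k - 1)) * (1 / q - 1 / k)) := by
        unfold approxScale; field_simp
    _ ≤ 1 := rpow_le_one_of_one_le_of_nonpos hM hexp

lemma approxScale_rpow_mul_rpow {M q k β : ℝ} (hM : 0 < M) (hβ : 0 ≤ β) (hq : q ≠ 0)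
    (hk : k ≠ 0) (hk1 : k ≠ 1) :
    approxScale M q k β ^ (k - 1) * M ^ (k / q - 1) = (1 / (16 * β)) ^ (k - 1) := by
  unfold approxScale
  rw [mul_rpow (by positivity) (by positivity), ← rpow_mul hM.le, mul_assoc, ← rpow_add hM,
    show -(k / (k - 1)) * (1 / q - 1 / k) * (k - 1) + (k / q - 1) = 0 by field_simp; ring,
    rpow_zero, mul_one]

lemma two_mul_sum_mul_sq_mul_le {ι : Type*} (s : Finset ι) (r x : ι → ℝ) {α β ν : ℝ}
    (hα : 0 ≤ α) (hν : 0 ≤ ν) (hαβ : α * (16 * β) ≤ 1) (h : ∑ i ∈ s, r i * x i ^ 2 ≤ β * ν) :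
    2 * ∑ i ∈ s, r i * (α * x i) ^ 2 ≤ α * ν / 8 :=
  calc 2 * ∑ i ∈ s, r i * (α * x i) ^ 2 = 2 * α ^ 2 * ∑ i ∈ s, r i * x i ^ 2 := by
        rw [mul_sum, mul_sum]; exact sum_congr rfl fun i _ => by ring
    _ ≤ 2 * α ^ 2 * (β * ν) := by gcongr
    _ = α * (16 * β) * (α * ν / 8) := by ring
    _ ≤ α * ν / 8 := mul_le_of_le_one_left (by positivity) hαβ

lemma sum_abs_approxScale_mul_rpow_le {ι : Type*} (s : Finset ι) (x : ι → ℝ) {M q k β ν : ℝ}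
    (hM : 1 ≤ M) (hq : 2 ≤ q) (hqk : q ≤ k) (hβ : 1 ≤ β) (hν : 0 < ν)
    (h : (ν / M) ^ (1 - q / k) * ∑ i ∈ s, |x i| ^ q ≤ 2 * β * ν) :
    ∑ i ∈ s, |approxScale M q k β * x i| ^ k ≤ approxScale M q k β * ν / 8 := by
  set α := approxScale M q k β
  set t := k / q
  have hM0 : 0 < M := by linarith
  have hα0 : 0 ≤ α := approxScale_nonneg hM0.le (by linarith)
  have hQ : (∑ i ∈ s, |x i| ^ q) ^ t ≤ (2 * β) ^ t * ν * M ^ (t - 1) :=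
    rpow_le_of_div_rpow_mul_le (by positivity) (by positivity) hν hM0
      (div_pos (by linarith) (by linarith)) (by rwa [one_div_div])
  have hαM : α ^ (k - 1) * M ^ (t - 1) = (1 / (16 * β)) ^ (k - 1) :=
    approxScale_rpow_mul_rpow hM0 (by linarith) (by linarith) (by linarith) (by linarith)
  have hβk : 8 * (2 * β) ^ t ≤ (16 * β) ^ (k - 1) := by
    have ht : t ≤ k - 1 := by rw [div_le_iff₀ (by linarith)]; nlinarith
    have := mul_rpow_le_rpow_of_one_le (b := 2 * β) (c := 8) (by linarith) (by norm_num) ht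
      (by linarith)
    rwa [show 8 * (2 * β) = 16 * β by ring] at this
  have hαk : α ^ k = α ^ (k - 1) * α := by
    rw [← rpow_add_one' hα0 (by norm_num; linarith), sub_add_cancel]
  calc ∑ i ∈ s, |α * x i| ^ k = α ^ k * ∑ i ∈ s, |x i| ^ k := by
        rw [mul_sum]
        exact sum_congr rfl fun i _ => by
          rw [abs_mul, abs_of_nonneg hα0, mul_rpow hα0 (abs_nonneg _)]
    _ ≤ α ^ k * ((2 * β) ^ t * ν * M ^ (t - 1)) := by
        gcongr
        exact (sum_abs_rpow_le_rpow_sum_abs_rpow s x (by linarith) hqk).trans hQ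
    _ = α * ν * ((2 * β) ^ t * (α ^ (k - 1) * M ^ (t - 1))) := by
        rw [hαk]; ring
    _ = α * ν * ((2 * β) ^ t / (16 * β) ^ (k - 1)) := by
        rw [hαM, one_div, inv_rpow (by linarith), div_eq_mul_inv]
    _ ≤ α * ν * (1 / 8) := by
        refine mul_le_mul_of_nonneg_left ?_ (by positivity)
        rw [div_le_iff₀ (by positivity)]; linarith
    _ = α * ν / 8 := by ring

/-- Lemma 3.1, ApproxLargep, conclusion.
`‖x‖_p^p` is formalized as `∑ e, |x e| ^ p` (real power). -/
theorem stmt_0 {m : ℕ} (hm : 1 ≤ m) {q k : ℝ} (hq : 2 ≤ q) (hqk : q ≤ k)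
    (r Δ : Fin m → ℝ) (hr : ∀ e, 0 ≤ r e) {ν β α : ℝ} (hν : 0 < ν) (hβ : 1 ≤ β)
    (hα : α = 1 / (16 * β) * (m : ℝ) ^ (-(k / (k - 1)) * (1 / q - 1 / k)))
    (hΔ : (∑ e, r e * Δ e ^ 2) + 1 / 2 * ((ν / (m : ℝ)) ^ (1 - q / k)) * (∑ e, |Δ e| ^ q)
        ≤ β * ν) :
    2 * (∑ e, r e * (α * Δ e) ^ 2) + (∑ e, |α * Δ e| ^ k) ≤ α * ν / 4 := by
  have hM : (1 : ℝ) ≤ m := by exact_mod_cast hm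
  have hR : 0 ≤ ∑ e, r e * Δ e ^ 2 := sum_nonneg fun e _ => mul_nonneg (hr e) (sq_nonneg _)
  have hQ : 0 ≤ (ν / m) ^ (1 - q / k) * ∑ e, |Δ e| ^ q := by positivity
  obtain rfl : α = approxScale m q k β := hα
  have hα0 : 0 ≤ approxScale m q k β := approxScale_nonneg (by linarith) (by linarith)
  have hquad := two_mul_sum_mul_sq_mul_le univ r Δ hα0 hν.le
    (approxScale_mul_le_one hM (by linarith) (by linarith) hqk) (by linarith)
  have hpow := sum_abs_approxScale_mul_rpow_le univ Δ hM hq hqk hβ hν (by linarith)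
  linarith
end

section
/- Let m ≥ 1 be an integer, let k and q be reals with 2 ≤ k ≤ q, let A ∈ ℝ^{n×m}, g ∈ ℝ^m, r ∈ ℝ^m with nonnegative entries, and ν > 0, β ≥ 1 reals. Suppose Δ̃ ∈ ℝ^m satisfies AΔ̃ = 0, g^⊤Δ̃ = ν/2, and ∑_e r_e Δ̃_e² + (ν^{1−q/k}/2^{q/k})‖Δ̃‖_q^q ≤ βν. Set α = (1/(16β))·m^{−(k/(k−1))(1/k−1/q)}. Then res_k(αΔ̃) ≥ αν/4; consequently, if res_k(Δ) ≤ ν for every Δ with AΔ = 0, then res_k(αΔ̃) ≥ (1/(64β))·m^{−(k/(k−1))(1/k−1/q)}·res_k(Δ) for every Δ with AΔ = 0. -/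
/-! Scaling by `α > 0` turns the objective into `α ν/2 − 2α² ∑ r Δ̃² − α^k ‖Δ̃‖_k^k`. The
hypothesis gives `∑ r Δ̃² ≤ βν` and `‖Δ̃‖_q^q ≤ β (2ν)^{q/k}`, and comparing the `ℓ_k` and `ℓ_q`
norms, `‖x‖_k^k ≤ m^{1-k/q} ‖x‖_q^k`, bounds `‖Δ̃‖_k^k`. The power of `m` in `α` is chosen so that
`α^{k-1}` cancels `m^{1-k/q}`; then each negative term is at most `αν/8`. The comparison with
`res_k(Δ)` follows from `res_k(Δ) ≤ ν`. -/

/-- The residual objective `res_p(Δ) = g^⊤Δ − 2∑_e r_e Δ_e² − ‖Δ‖_p^p`. -/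
noncomputable def res {m : ℕ} (g r : Fin m → ℝ) (p : ℝ) (Δ : Fin m → ℝ) : ℝ :=
  (∑ e, g e * Δ e) - 2 * (∑ e, r e * Δ e ^ 2) - ∑ e, |Δ e| ^ p

open Finset

theorem sum_abs_rpow_le_card_rpow_mul {ι : Type*} [Fintype ι] (x : ι → ℝ) {p q : ℝ}
    (hp : 0 < p) (hpq : p ≤ q) :
    ∑ i, |x i| ^ p ≤ (Fintype.card ι : ℝ) ^ (1 - p / q) * (∑ i, |x i| ^ q) ^ (p / q) := by
  have hq : 0 < q := hp.trans_le hpq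
  have hpow : ∀ i, (|x i| ^ p) ^ (q / p) = |x i| ^ q := fun i => by
    rw [← Real.rpow_mul (abs_nonneg _), mul_div_cancel₀ q hp.ne']
  have h := Real.rpow_sum_le_const_mul_sum_rpow_of_nonneg univ ((one_le_div hp).mpr hpq)
    (fun i _ => Real.rpow_nonneg (abs_nonneg (x i)) p)
  simp only [hpow, card_univ] at h
  calc ∑ i, |x i| ^ p = ((∑ i, |x i| ^ p) ^ (q / p)) ^ (p / q) := by
        rw [← Real.rpow_mul (by positivity), div_mul_div_cancel₀ hp.ne', div_self hq.ne',
          Real.rpow_one]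
    _ ≤ ((Fintype.card ι : ℝ) ^ (q / p - 1) * ∑ i, |x i| ^ q) ^ (p / q) := by
        gcongr
    _ = _ := by
        rw [Real.mul_rpow (by positivity) (by positivity), ← Real.rpow_mul (by positivity)]
        congr 2
        field_simp

theorem res_const_mul {m : ℕ} (g r : Fin m → ℝ) (p : ℝ) (Δ : Fin m → ℝ) {a : ℝ} (ha : 0 ≤ a) :
    res g r p (fun e => a * Δ e)
      = a * ∑ e, g e * Δ e - 2 * (a ^ 2 * ∑ e, r e * Δ e ^ 2) - a ^ p * ∑ e, |Δ e| ^ p := by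
  simp only [res, mul_sum, abs_mul, abs_of_nonneg ha, Real.mul_rpow ha (abs_nonneg _)]
  congr 2 <;> exact sum_congr rfl fun e _ => by ring

theorem le_mul_two_mul_rpow_of_rpow_div_mul_le {ν s x β : ℝ} (hν : 0 < ν)
    (h : ν ^ (1 - s) / 2 ^ s * x ≤ β * ν) : x ≤ β * (2 * ν) ^ s := by
  have hc : ν ^ (1 - s) / 2 ^ s = ν / (2 * ν) ^ s := by
    rw [Real.rpow_sub hν, Real.rpow_one, Real.mul_rpow zero_le_two hν.le, div_div, mul_comm]
  rw [hc, div_mul_eq_mul_div, div_le_iff₀ (by positivity)] at h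
  nlinarith

theorem mul_rpow_neg_rpow_sub_one_mul_rpow {a m k q : ℝ} (ha : 0 ≤ a) (hm : 0 < m) (hk : 1 < k)
    (hq : q ≠ 0) :
    (a * m ^ (-(k / (k - 1)) * (1 / k - 1 / q))) ^ (k - 1) * m ^ (1 - k / q) = a ^ (k - 1) := by
  have hk1 : k - 1 ≠ 0 := sub_ne_zero.mpr hk.ne'
  have hk0 : k ≠ 0 := by positivity
  rw [Real.mul_rpow ha (by positivity), ← Real.rpow_mul hm.le, mul_assoc, ← Real.rpow_add hm]
  convert mul_one _ using 2
  convert Real.rpow_zero m using 2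
  field_simp
  ring

theorem inv_rpow_sub_one_mul_rpow_le {β k q : ℝ} (hβ : 1 ≤ β) (hk : 2 ≤ k) (hkq : k ≤ q) :
    (1 / (16 * β)) ^ (k - 1) * β ^ (k / q) ≤ 1 / 16 := by
  have hβ0 : 0 < β := by linarith
  have hsmall : (1 / (16 * β)) ^ (k - 1) ≤ 1 / (16 * β) := by
    refine (Real.rpow_le_rpow_of_exponent_ge (by positivity) ?_ (by linarith)).trans_eq
      (Real.rpow_one _)
    rw [div_le_one (by positivity)]
    linarith
  have hbig : β ^ (k / q) ≤ β :=
    (Real.rpow_le_rpow_of_exponent_le hβ ((div_le_one (by linarith)).mpr hkq)).trans_eq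
      (Real.rpow_one β)
  calc (1 / (16 * β)) ^ (k - 1) * β ^ (k / q) ≤ 1 / (16 * β) * β :=
        mul_le_mul hsmall hbig (by positivity) (by positivity)
    _ = 1 / 16 := by field_simp

theorem rpow_mul_sum_abs_rpow_le {m : ℕ} (hm : 0 < m) {k q β ν α : ℝ} (hk : 2 ≤ k)
    (hkq : k ≤ q) (hβ : 1 ≤ β) (hν : 0 ≤ ν)
    (hα : α = 1 / (16 * β) * (m : ℝ) ^ (-(k / (k - 1)) * (1 / k - 1 / q))) (x : Fin m → ℝ)
    (hx : ∑ e, |x e| ^ q ≤ β * (2 * ν) ^ (q / k)) :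
    α ^ k * ∑ e, |x e| ^ k ≤ α * ν / 8 := by
  have hm0 : (0 : ℝ) < m := by exact_mod_cast hm
  have hk0 : 0 < k := by linarith
  have hq0 : 0 < q := by linarith
  have hα0 : 0 < α := by rw [hα]; positivity
  have hx_k : ∑ e, |x e| ^ k ≤ (m : ℝ) ^ (1 - k / q) * (β ^ (k / q) * (2 * ν)) := by
    refine (sum_abs_rpow_le_card_rpow_mul x hk0 hkq).trans ?_
    rw [Fintype.card_fin]
    gcongr
    calc (∑ e, |x e| ^ q) ^ (k / q) ≤ (β * (2 * ν) ^ (q / k)) ^ (k / q) :=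
          Real.rpow_le_rpow (by positivity) hx (div_pos hk0 hq0).le
      _ = β ^ (k / q) * (2 * ν) := by
        rw [Real.mul_rpow (by positivity) (by positivity), ← Real.rpow_mul (by positivity),
          div_mul_div_cancel₀ hk0.ne', div_self hq0.ne', Real.rpow_one]
  calc α ^ k * ∑ e, |x e| ^ k
      ≤ α ^ k * ((m : ℝ) ^ (1 - k / q) * (β ^ (k / q) * (2 * ν))) := by gcongr
    _ = α * ((α ^ (k - 1) * (m : ℝ) ^ (1 - k / q)) * β ^ (k / q)) * (2 * ν) := by
        rw [Real.rpow_sub_one hα0.ne']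
        field_simp
    _ = α * ((1 / (16 * β)) ^ (k - 1) * β ^ (k / q)) * (2 * ν) := by
        rw [hα, mul_rpow_neg_rpow_sub_one_mul_rpow (by positivity) hm0 (by linarith)
          hq0.ne']
    _ ≤ α * (1 / 16) * (2 * ν) := by gcongr; exact inv_rpow_sub_one_mul_rpow_le hβ hk hkq
    _ = α * ν / 8 := by ring

theorem stmt_2_general {n m : ℕ} (hm : 1 ≤ m) {k q : ℝ} (hk : 2 ≤ k) (hkq : k ≤ q)
    (A : Matrix (Fin n) (Fin m) ℝ) (g r Δt : Fin m → ℝ) (hr : ∀ e, 0 ≤ r e)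
    {ν β α : ℝ} (hν : 0 < ν) (hβ : 1 ≤ β)
    (hα : α = 1 / (16 * β) * (m : ℝ) ^ (-(k / (k - 1)) * (1 / k - 1 / q)))
    (hgΔ : (∑ e, g e * Δt e) = ν / 2)
    (hΔ : (∑ e, r e * Δt e ^ 2) + (ν ^ (1 - q / k) / (2 : ℝ) ^ (q / k)) * (∑ e, |Δt e| ^ q)
        ≤ β * ν) :
    res g r k (fun e => α * Δt e) ≥ α * ν / 4 ∧
      ((∀ Δ, A.mulVec Δ = 0 → res g r k Δ ≤ ν) →
        ∀ Δ, A.mulVec Δ = 0 →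
          res g r k (fun e => α * Δt e)
            ≥ 1 / (64 * β) * (m : ℝ) ^ (-(k / (k - 1)) * (1 / k - 1 / q)) * res g r k Δ) := by
  have hβ0 : 0 < β := by linarith
  have hα0 : 0 < α := by rw [hα]; positivity
  have hαβ : α ≤ 1 / (16 * β) := by
    rw [hα]
    refine mul_le_of_le_one_right (by positivity) (Real.rpow_le_one_of_one_le_of_nonpos
      (by exact_mod_cast hm) ?_)
    exact mul_nonpos_of_nonpos_of_nonneg (neg_nonpos.mpr (div_nonneg (by linarith) (by linarith)))
      (sub_nonneg.mpr (one_div_le_one_div_of_le (by linarith) hkq))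
  have hS0 : 0 ≤ ∑ e, r e * Δt e ^ 2 := sum_nonneg fun e _ => mul_nonneg (hr e) (sq_nonneg _)
  have hQ0 : 0 ≤ ν ^ (1 - q / k) / 2 ^ (q / k) * ∑ e, |Δt e| ^ q := by positivity
  have h_quad : 2 * (α ^ 2 * ∑ e, r e * Δt e ^ 2) ≤ α * ν / 8 := by
    have : α * ∑ e, r e * Δt e ^ 2 ≤ 1 / (16 * β) * (β * ν) := by gcongr; linarith
    field_simp at this
    nlinarith
  have h_pow := rpow_mul_sum_abs_rpow_le hm hk hkq hβ hν.le hα Δt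
    (le_mul_two_mul_rpow_of_rpow_div_mul_le hν (by linarith))
  have h_main : res g r k (fun e => α * Δt e) ≥ α * ν / 4 := by
    rw [res_const_mul g r k Δt hα0.le, hgΔ]
    linarith
  refine ⟨h_main, fun h_le Δ hΔ0 => ?_⟩
  have h_coeff : 1 / (64 * β) * (m : ℝ) ^ (-(k / (k - 1)) * (1 / k - 1 / q)) = α / 4 := by
    rw [hα]; ring
  rw [h_coeff, ge_iff_le]
  calc α / 4 * res g r k Δ ≤ α / 4 * ν := by gcongr; exact h_le Δ hΔ0
    _ = α * ν / 4 := by ring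
    _ ≤ res g r k (fun e => α * Δt e) := h_main

/-- Lemma 3.3, ApproxSmallp, case `k ≤ q`. -/
theorem stmt_2 {n m : ℕ} (hm : 1 ≤ m) {k q : ℝ} (hk : 2 ≤ k) (hkq : k ≤ q)
    (A : Matrix (Fin n) (Fin m) ℝ) (g r Δt : Fin m → ℝ) (hr : ∀ e, 0 ≤ r e)
    {ν β α : ℝ} (hν : 0 < ν) (hβ : 1 ≤ β)
    (hα : α = 1 / (16 * β) * (m : ℝ) ^ (-(k / (k - 1)) * (1 / k - 1 / q)))
    (hAΔ : A.mulVec Δt = 0) (hgΔ : (∑ e, g e * Δt e) = ν / 2)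
    (hΔ : (∑ e, r e * Δt e ^ 2) + (ν ^ (1 - q / k) / (2 : ℝ) ^ (q / k)) * (∑ e, |Δt e| ^ q)
        ≤ β * ν) :
    res g r k (fun e => α * Δt e) ≥ α * ν / 4 ∧
      ((∀ Δ, A.mulVec Δ = 0 → res g r k Δ ≤ ν) →
        ∀ Δ, A.mulVec Δ = 0 →
          res g r k (fun e => α * Δt e)
            ≥ 1 / (64 * β) * (m : ℝ) ^ (-(k / (k - 1)) * (1 / k - 1 / q)) * res g r k Δ) :=
  stmt_2_general hm hk hkq A g r Δt hr hν hβ hα hgΔ hΔ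
end

section
/- Let k ≥ 2 be real, A ∈ ℝ^{n×m}, g ∈ ℝ^m, r ∈ ℝ^m with nonnegative entries, and ν > 0. Suppose Δ* maximizes res_k(Δ) = g^⊤Δ − 2∑_e r_e Δ_e² − ‖Δ‖_k^k over {Δ ∈ ℝ^m : AΔ = 0}, and res_k(Δ*) ∈ (ν/2, ν]. Then there exists Δ ∈ ℝ^m with AΔ = 0, g^⊤Δ = ν/2, and 2∑_{e=1}^m r_e Δ_e² + ‖Δ‖_k^k ≤ ν. -/
section Scaling

variable {ι : Type*} [Fintype ι] {t : ℝ}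

lemma sum_mul_sq_smul_le {r : ι → ℝ} (hr : ∀ e, 0 ≤ r e) (ht0 : 0 ≤ t) (ht1 : t ≤ 1)
    (Δ : ι → ℝ) : ∑ e, r e * (t • Δ) e ^ 2 ≤ t * ∑ e, r e * Δ e ^ 2 := by
  rw [Finset.mul_sum]
  refine Finset.sum_le_sum fun e _ => ?_
  have ht2 : t ^ 2 ≤ t := pow_le_of_le_one ht0 ht1 two_ne_zero
  calc r e * (t • Δ) e ^ 2 = t ^ 2 * (r e * Δ e ^ 2) := by
        simp only [Pi.smul_apply, smul_eq_mul]; ring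
    _ ≤ t * (r e * Δ e ^ 2) := mul_le_mul_of_nonneg_right ht2 (mul_nonneg (hr e) (sq_nonneg _))

lemma sum_abs_rpow_smul_le {k : ℝ} (hk : 1 ≤ k) (ht0 : 0 ≤ t) (ht1 : t ≤ 1) (Δ : ι → ℝ) :
    ∑ e, |(t • Δ) e| ^ k ≤ t * ∑ e, |Δ e| ^ k := by
  rw [Finset.mul_sum]
  refine Finset.sum_le_sum fun e _ => ?_
  calc |(t • Δ) e| ^ k = t ^ k * |Δ e| ^ k := by
        rw [Pi.smul_apply, smul_eq_mul, abs_mul, abs_of_nonneg ht0, Real.mul_rpow ht0 (abs_nonneg _)]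
    _ ≤ t * |Δ e| ^ k := mul_le_mul_of_nonneg_right (Real.rpow_le_self_of_le_one ht0 ht1 hk)
        (Real.rpow_nonneg (abs_nonneg _) _)

lemma penalty_smul_le {r : ι → ℝ} (hr : ∀ e, 0 ≤ r e) {k : ℝ} (hk : 1 ≤ k) (ht0 : 0 ≤ t)
    (ht1 : t ≤ 1) (Δ : ι → ℝ) :
    2 * ∑ e, r e * (t • Δ) e ^ 2 + ∑ e, |(t • Δ) e| ^ k ≤
      t * (2 * ∑ e, r e * Δ e ^ 2 + ∑ e, |Δ e| ^ k) := by
  linarith [sum_mul_sq_smul_le hr ht0 ht1 Δ, sum_abs_rpow_smul_le hk ht0 ht1 Δ]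

lemma penalty_nonneg {r : ι → ℝ} (hr : ∀ e, 0 ≤ r e) (k : ℝ) (Δ : ι → ℝ) :
    0 ≤ 2 * ∑ e, r e * Δ e ^ 2 + ∑ e, |Δ e| ^ k := by
  have hq : 0 ≤ ∑ e, r e * Δ e ^ 2 := Finset.sum_nonneg fun e _ => mul_nonneg (hr e) (sq_nonneg _)
  have hp : 0 ≤ ∑ e, |Δ e| ^ k := Finset.sum_nonneg fun e _ => Real.rpow_nonneg (abs_nonneg _) _
  positivity

end Scaling

theorem stmt_5_general {n m : ℕ} {k : ℝ} (hk : 2 ≤ k)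
    (A : Matrix (Fin n) (Fin m) ℝ) (g r : Fin m → ℝ) (hr : ∀ e, 0 ≤ r e)
    {ν : ℝ} (hν : 0 < ν) (Δs : Fin m → ℝ) (hAs : A.mulVec Δs = 0)
    (hlo : ν / 2 < res g r k Δs) :
    ∃ Δ : Fin m → ℝ, A.mulVec Δ = 0 ∧ (∑ e, g e * Δ e) = ν / 2 ∧
      2 * (∑ e, r e * Δ e ^ 2) + (∑ e, |Δ e| ^ k) ≤ ν := by
  set G := g ⬝ᵥ Δs
  have hpen : 2 * ∑ e, r e * Δs e ^ 2 + ∑ e, |Δs e| ^ k < G - ν / 2 := by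
    unfold res at hlo; change ν / 2 < G - _ - _ at hlo; linarith
  have hG : ν / 2 < G := by linarith [penalty_nonneg hr k Δs]
  have hG0 : 0 < G := by linarith
  set t := ν / (2 * G) with ht
  have htG : t * G = ν / 2 := by rw [ht]; field_simp [hG0.ne']
  have ht0 : 0 ≤ t := div_nonneg hν.le (by linarith)
  have ht1 : t ≤ 1 := (div_le_one (by linarith)).2 (by linarith)
  refine ⟨t • Δs, by rw [Matrix.mulVec_smul, hAs, smul_zero], ?_, ?_⟩
  · change g ⬝ᵥ (t • Δs) = ν / 2
    rw [dotProduct_smul, smul_eq_mul, htG]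
  · calc 2 * ∑ e, r e * (t • Δs) e ^ 2 + ∑ e, |(t • Δs) e| ^ k
        ≤ t * (2 * ∑ e, r e * Δs e ^ 2 + ∑ e, |Δs e| ^ k) :=
          penalty_smul_le hr (by linarith) ht0 ht1 Δs
      _ ≤ t * G := mul_le_mul_of_nonneg_left (by linarith) ht0
      _ ≤ ν := by linarith

/-- Lemma B.3, Decision. -/
theorem stmt_5 {n m : ℕ} {k : ℝ} (hk : 2 ≤ k)
    (A : Matrix (Fin n) (Fin m) ℝ) (g r : Fin m → ℝ) (hr : ∀ e, 0 ≤ r e)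
    {ν : ℝ} (hν : 0 < ν) (Δs : Fin m → ℝ) (hAs : A.mulVec Δs = 0)
    (hmax : ∀ Δ, A.mulVec Δ = 0 → res g r k Δ ≤ res g r k Δs)
    (hlo : ν / 2 < res g r k Δs) (hhi : res g r k Δs ≤ ν) :
    ∃ Δ : Fin m → ℝ, A.mulVec Δ = 0 ∧ (∑ e, g e * Δ e) = ν / 2 ∧
      2 * (∑ e, r e * Δ e ^ 2) + (∑ e, |Δ e| ^ k) ≤ ν :=
  stmt_5_general hk A g r hr hν Δs hAs hlo
end

section
/- Let p ≥ 2 be real, A ∈ ℝ^{n×m}, b ∈ ℝ^n, and C ≥ 1. Suppose x₀ ∈ ℝ^m satisfies Ax₀ = b and ‖x₀‖_p^p ≤ C·‖x‖_p^p for every x with Ax = b. Then for every x* with Ax* = b, ‖x₀‖_{2p}^{2p} ≤ C² m ‖x*‖_{2p}^{2p}. -/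
/-! Squaring the `p`-th powers turns the `2p`-norm sum into a sum of squares, which lies between
`(∑ |x e| ^ p) ^ 2 / m` (Cauchy–Schwarz) and `(∑ |x e| ^ p) ^ 2` (nonnegative terms). Squaring the
approximation guarantee `‖x₀‖_p^p ≤ C ‖x*‖_p^p` and applying both bounds gives the factor `C² m`. -/

open Finset

lemma abs_rpow_two_mul (a p : ℝ) : |a| ^ (2 * p) = (|a| ^ p) ^ 2 := by
  rw [mul_comm, Real.rpow_mul (abs_nonneg a), Real.rpow_two]

section

variable {ι : Type*} [Fintype ι]

lemma sum_abs_rpow_two_mul_le_sq_sum_abs_rpow (x : ι → ℝ) (p : ℝ) :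
    ∑ e, |x e| ^ (2 * p) ≤ (∑ e, |x e| ^ p) ^ 2 := by
  simp_rw [abs_rpow_two_mul]
  exact sum_sq_le_sq_sum_of_nonneg fun e _ => by positivity

lemma sq_sum_abs_rpow_le_card_mul_sum_abs_rpow_two_mul (x : ι → ℝ) (p : ℝ) :
    (∑ e, |x e| ^ p) ^ 2 ≤ Fintype.card ι * ∑ e, |x e| ^ (2 * p) := by
  simp_rw [abs_rpow_two_mul]
  exact sq_sum_le_card_mul_sum_sq

end

theorem stmt_6_general {n m : ℕ} {p : ℝ}
    (A : Matrix (Fin n) (Fin m) ℝ) (b : Fin n → ℝ) {C : ℝ}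
    (x₀ : Fin m → ℝ)
    (happrox : ∀ x, A.mulVec x = b → (∑ e, |x₀ e| ^ p) ≤ C * ∑ e, |x e| ^ p) :
    ∀ xs, A.mulVec xs = b →
      (∑ e, |x₀ e| ^ (2 * p)) ≤ C ^ 2 * (m : ℝ) * ∑ e, |xs e| ^ (2 * p) := by
  intro xs hxs
  have hx₀_nonneg : 0 ≤ ∑ e, |x₀ e| ^ p := sum_nonneg fun e _ => by positivity
  calc ∑ e, |x₀ e| ^ (2 * p) ≤ (∑ e, |x₀ e| ^ p) ^ 2 :=
        sum_abs_rpow_two_mul_le_sq_sum_abs_rpow x₀ p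
    _ ≤ (C * ∑ e, |xs e| ^ p) ^ 2 := pow_le_pow_left₀ hx₀_nonneg (happrox xs hxs) 2
    _ = C ^ 2 * (∑ e, |xs e| ^ p) ^ 2 := mul_pow _ _ 2
    _ ≤ C ^ 2 * ((m : ℝ) * ∑ e, |xs e| ^ (2 * p)) := by
        gcongr
        simpa using sq_sum_abs_rpow_le_card_mul_sum_abs_rpow_two_mul xs p
    _ = C ^ 2 * (m : ℝ) * ∑ e, |xs e| ^ (2 * p) := (mul_assoc _ _ _).symm

/-- initial-gap bound in Corollary B.2, IterativeRefinement. -/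
theorem stmt_6 {n m : ℕ} {p : ℝ} (hp : 2 ≤ p)
    (A : Matrix (Fin n) (Fin m) ℝ) (b : Fin n → ℝ) {C : ℝ} (hC : 1 ≤ C)
    (x₀ : Fin m → ℝ) (hx₀ : A.mulVec x₀ = b)
    (happrox : ∀ x, A.mulVec x = b → (∑ e, |x₀ e| ^ p) ≤ C * ∑ e, |x e| ^ p) :
    ∀ xs, A.mulVec xs = b →
      (∑ e, |x₀ e| ^ (2 * p)) ≤ C ^ 2 * (m : ℝ) * ∑ e, |xs e| ^ (2 * p) :=
  stmt_6_general A b x₀ happrox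
end

section
/- Let p and q be reals with 2 ≤ p ≤ q, A ∈ ℝ^{n×m}, b ∈ ℝ^n, and C ≥ 1. Suppose x₀ ∈ ℝ^m satisfies Ax₀ = b and ‖x₀‖_q^q ≤ C·‖x‖_q^q for every x with Ax = b. Then for every x* with Ax* = b, ‖x₀‖_p^p ≤ C^{p/q} m^{1−p/q} ‖x*‖_p^p. -/
/-! With `r = q / p ≥ 1` and `S_t x = ∑ |x e| ^ t`, Hölder gives `S_p x₀ ^ r ≤ m ^ (r - 1) * S_q x₀`,
while `‖·‖_q ≤ ‖·‖_p` gives `S_q xs ≤ S_p xs ^ r`. Chaining these through the approximation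
hypothesis bounds `S_p x₀ ^ r` by `C * m ^ (r - 1) * S_p xs ^ r`; take `r`-th roots. -/

open Finset Real

namespace Real

theorem sum_rpow_le_rpow_sum {ι : Type*} (s : Finset ι) {f : ι → ℝ} (hf : ∀ i ∈ s, 0 ≤ f i)
    {t : ℝ} (ht : 1 ≤ t) : ∑ i ∈ s, f i ^ t ≤ (∑ i ∈ s, f i) ^ t := by
  classical
  induction s using Finset.induction_on with
  | empty => simp [zero_rpow (by linarith : t ≠ 0)]
  | insert a s ha ih =>
    rw [sum_insert ha, sum_insert ha]
    have hfs : ∀ i ∈ s, 0 ≤ f i := fun i hi => hf i (mem_insert_of_mem hi)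
    calc f a ^ t + ∑ i ∈ s, f i ^ t ≤ f a ^ t + (∑ i ∈ s, f i) ^ t := by gcongr; exact ih hfs
      _ ≤ (f a + ∑ i ∈ s, f i) ^ t :=
        add_rpow_le_rpow_add (hf a (mem_insert_self a s)) (sum_nonneg hfs) ht

theorem le_rpow_inv_mul_of_rpow_le {a b K r : ℝ} (ha : 0 ≤ a) (hb : 0 ≤ b) (hK : 0 ≤ K)
    (hr : 0 < r) (h : a ^ r ≤ K * b ^ r) : a ≤ K ^ r⁻¹ * b := by
  rwa [← rpow_rpow_inv hb hr.ne', ← mul_rpow hK (rpow_nonneg hb r),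
    le_rpow_inv_iff_of_pos ha (mul_nonneg hK (rpow_nonneg hb r)) hr]

end Real

section PNorm

variable {ι : Type*} [Fintype ι] {p q : ℝ}

theorem abs_rpow_rpow_div (a : ℝ) (hp : 0 < p) : (|a| ^ p) ^ (q / p) = |a| ^ q := by
  rw [← rpow_mul (abs_nonneg a), mul_div_cancel₀ q hp.ne']

theorem sum_abs_rpow_le_rpow_sum_abs_rpow_s7 (x : ι → ℝ) (hp : 0 < p) (hpq : p ≤ q) :
    ∑ i, |x i| ^ q ≤ (∑ i, |x i| ^ p) ^ (q / p) := by
  simp_rw [← abs_rpow_rpow_div _ hp (q := q)]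
  exact sum_rpow_le_rpow_sum _ (fun i _ => rpow_nonneg (abs_nonneg _) p)
    ((one_le_div hp).2 hpq)

theorem rpow_sum_abs_rpow_le_card_mul (x : ι → ℝ) (hp : 0 < p) (hpq : p ≤ q) :
    (∑ i, |x i| ^ p) ^ (q / p) ≤ (Fintype.card ι : ℝ) ^ (q / p - 1) * ∑ i, |x i| ^ q := by
  simp_rw [← abs_rpow_rpow_div _ hp (q := q)]
  exact rpow_sum_le_const_mul_sum_rpow_of_nonneg _ ((one_le_div hp).2 hpq)
    (fun i _ => rpow_nonneg (abs_nonneg _) p)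

end PNorm

theorem stmt_7_general {n m : ℕ} {p q : ℝ} (hp : 2 ≤ p) (hpq : p ≤ q)
    (A : Matrix (Fin n) (Fin m) ℝ) (b : Fin n → ℝ) {C : ℝ} (hC : 1 ≤ C)
    (x₀ : Fin m → ℝ)
    (happrox : ∀ x, A.mulVec x = b → (∑ e, |x₀ e| ^ q) ≤ C * ∑ e, |x e| ^ q) :
    ∀ xs, A.mulVec xs = b →
      (∑ e, |x₀ e| ^ p) ≤ C ^ (p / q) * (m : ℝ) ^ (1 - p / q) * ∑ e, |xs e| ^ p := by
  intro xs hxs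
  have hp0 : 0 < p := by linarith
  have hq0 : 0 < q := by linarith
  have hsum_nonneg : ∀ x : Fin m → ℝ, 0 ≤ ∑ e, |x e| ^ p :=
    fun x => sum_nonneg fun e _ => rpow_nonneg (abs_nonneg _) p
  have key : (∑ e, |x₀ e| ^ p) ^ (q / p)
      ≤ (C * (m : ℝ) ^ (q / p - 1)) * (∑ e, |xs e| ^ p) ^ (q / p) := by
    calc (∑ e, |x₀ e| ^ p) ^ (q / p) ≤ (m : ℝ) ^ (q / p - 1) * ∑ e, |x₀ e| ^ q := by
          simpa using rpow_sum_abs_rpow_le_card_mul x₀ hp0 hpq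
      _ ≤ (m : ℝ) ^ (q / p - 1) * (C * (∑ e, |xs e| ^ p) ^ (q / p)) := by
          gcongr
          exact (happrox xs hxs).trans
            (by gcongr; exact sum_abs_rpow_le_rpow_sum_abs_rpow_s7 xs hp0 hpq)
      _ = _ := by ring
  have hmC : 0 ≤ C * (m : ℝ) ^ (q / p - 1) := by positivity
  have hexp : (q / p - 1) * (p / q) = 1 - p / q := by field_simp
  calc ∑ e, |x₀ e| ^ p ≤ (C * (m : ℝ) ^ (q / p - 1)) ^ (q / p)⁻¹ * ∑ e, |xs e| ^ p :=
        le_rpow_inv_mul_of_rpow_le (hsum_nonneg x₀) (hsum_nonneg xs) hmC (by positivity) key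
    _ = _ := by
        rw [inv_div, mul_rpow (by linarith) (by positivity), ← rpow_mul (Nat.cast_nonneg m), hexp]

/-- initial-gap bound in Lemma B.5, IterativeRefinementSmall. -/
theorem stmt_7 {n m : ℕ} {p q : ℝ} (hp : 2 ≤ p) (hpq : p ≤ q)
    (A : Matrix (Fin n) (Fin m) ℝ) (b : Fin n → ℝ) {C : ℝ} (hC : 1 ≤ C)
    (x₀ : Fin m → ℝ) (hx₀ : A.mulVec x₀ = b)
    (happrox : ∀ x, A.mulVec x = b → (∑ e, |x₀ e| ^ q) ≤ C * ∑ e, |x e| ^ q) :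
    ∀ xs, A.mulVec xs = b →
      (∑ e, |x₀ e| ^ p) ≤ C ^ (p / q) * (m : ℝ) ^ (1 - p / q) * ∑ e, |xs e| ^ p :=
  stmt_7_general hp hpq A b hC x₀ happrox
end

section
/- Let p and q be reals with 2 ≤ q ≤ p, let m ≥ 1, A ∈ ℝ^{n×m}, g ∈ ℝ^m, r ∈ ℝ^m with nonnegative entries, and ν > 0. Suppose Δ* maximizes res_p over {Δ : AΔ = 0} with res_p(Δ*) ∈ (ν/2, ν]. Then: (i) there exists Δ with AΔ = 0 and g^⊤Δ + 2∑_e r_e Δ_e² + (1/4)(ν/m)^{1−q/p}‖Δ‖_q^q ≤ −ν/4; and (ii) if Δ̃ satisfies AΔ̃ = 0 and g^⊤Δ̃ + 2∑_e r_e Δ̃_e² + (1/4)(ν/m)^{1−q/p}‖Δ̃‖_q^q ≤ −ν/16, then there exists a scalar c ∈ ℝ such that res_p(cΔ̃) ≥ (1/16384)·ν·m^{−(p/(p−1))(1/q−1/p)}. -/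
/-!
(i) The witness is `-Δ*`. Coordinatewise weighted AM-GM gives
`(ν/m)^(1-q/p) |Δ_e|^q ≤ ν/m + |Δ_e|^p`, so the `q`-norm term of `-Δ*` is at most
`ν/4 + ‖Δ*‖_p^p`, which `res_p(Δ*) > ν/2` pays for.

(ii) For `t ∈ [0, 1]` the hypothesis on `Δ̃` gives
`res_p(-tΔ̃) ≥ t M - t^p ‖Δ̃‖_p^p` with `M = ν/16 + κ ‖Δ̃‖_q^q`. By AM-GM and `‖Δ̃‖_p ≤ ‖Δ̃‖_q`,
`M` dominates both `ν/16` and a multiple of `‖Δ̃‖_p`; taking `t = 1`, or `t` with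
`t^p ‖Δ̃‖_p^p` equal to the target, yields the bound.
-/

open Finset Real

lemma rpow_one_sub_mul_rpow_le_add {x y θ : ℝ} (hx : 0 ≤ x) (hy : 0 ≤ y) (h0 : 0 ≤ θ)
    (h1 : θ ≤ 1) : x ^ (1 - θ) * y ^ θ ≤ x + y := by
  have := geom_mean_le_arith_mean2_weighted (sub_nonneg.2 h1) h0 hx hy (by ring)
  nlinarith [mul_nonneg h0 hx, mul_nonneg (sub_nonneg.2 h1) hy]

section FiniteSums

variable {ι : Type*} [Fintype ι] {a : ι → ℝ}

lemma sum_rpow_le_rpow_sum_s10 (ha : ∀ i, 0 ≤ a i) {s : ℝ} (hs : 1 ≤ s) :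
    ∑ i, a i ^ s ≤ (∑ i, a i) ^ s := by
  set S := ∑ i, a i
  have hS : 0 ≤ S := sum_nonneg fun i _ => ha i
  have hsplit : ∀ x : ℝ, 0 ≤ x → x ^ s = x * x ^ (s - 1) := fun x hx => by
    rw [← rpow_one_add' hx (by linarith), add_sub_cancel]
  calc ∑ i, a i ^ s ≤ ∑ i, a i * S ^ (s - 1) := by
        refine sum_le_sum fun i _ => ?_
        rw [hsplit _ (ha i)]
        exact mul_le_mul_of_nonneg_left
          (rpow_le_rpow (ha i) (single_le_sum (fun j _ => ha j) (mem_univ i)) (by linarith)) (ha i)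
    _ = S ^ s := by rw [← sum_mul, hsplit S hS]

lemma rpow_sum_rpow_le (ha : ∀ i, 0 ≤ a i) {p q : ℝ} (hq : 0 < q) (hqp : q ≤ p) :
    (∑ i, a i ^ p) ^ (1 / p) ≤ (∑ i, a i ^ q) ^ (1 / q) := by
  have hp : 0 < p := hq.trans_le hqp
  have hpow : ∀ i, a i ^ p = (a i ^ q) ^ (p / q) := fun i => by
    rw [← rpow_mul (ha i), mul_div_cancel₀ _ hq.ne']
  have key : ∑ i, a i ^ p ≤ (∑ i, a i ^ q) ^ (p / q) := by
    simp only [hpow]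
    exact sum_rpow_le_rpow_sum_s10 (fun i => rpow_nonneg (ha i) q) ((one_le_div hq).2 hqp)
  calc (∑ i, a i ^ p) ^ (1 / p) ≤ ((∑ i, a i ^ q) ^ (p / q)) ^ (1 / p) := by
        gcongr
        exact sum_nonneg fun i _ => rpow_nonneg (ha i) p
    _ = (∑ i, a i ^ q) ^ (1 / q) := by
        rw [← rpow_mul (sum_nonneg fun i _ => rpow_nonneg (ha i) q)]
        congr 1
        field_simp

-- Weighted AM-GM in each coordinate: `x ^ (1 - q/p) * (a i ^ p) ^ (q/p) ≤ x + a i ^ p`.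
lemma rpow_mul_sum_rpow_le (ha : ∀ i, 0 ≤ a i) {x p q : ℝ} (hx : 0 ≤ x) (hq : 0 < q)
    (hqp : q ≤ p) :
    x ^ (1 - q / p) * ∑ i, a i ^ q ≤ Fintype.card ι * x + ∑ i, a i ^ p := by
  have hp : 0 < p := hq.trans_le hqp
  calc x ^ (1 - q / p) * ∑ i, a i ^ q = ∑ i, x ^ (1 - q / p) * (a i ^ p) ^ (q / p) := by
        rw [mul_sum]
        refine sum_congr rfl fun i _ => ?_
        rw [← rpow_mul (ha i), mul_div_cancel₀ _ hp.ne']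
    _ ≤ ∑ i, (x + a i ^ p) :=
        sum_le_sum fun i _ => rpow_one_sub_mul_rpow_le_add hx (rpow_nonneg (ha i) p)
          (div_nonneg hq.le hp.le) ((div_le_one hp).2 hqp)
    _ = Fintype.card ι * x + ∑ i, a i ^ p := by
        rw [sum_add_distrib, sum_const, card_univ, nsmul_eq_mul]

end FiniteSums

-- `t = 1` if `P ≤ T`; otherwise `t = (T/P)^(1/p)`, for which `t^p P = T` and `t M ≥ 2T`.
lemma exists_le_mul_sub_rpow_mul {M P T p : ℝ} (hp : 0 < p) (hT : 0 < T) (hP : 0 ≤ P)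
    (hM : 2 * T ≤ M) (hMP : 2 * T ^ (1 - 1 / p) * P ^ (1 / p) ≤ M) :
    ∃ t, 0 ≤ t ∧ t ≤ 1 ∧ T ≤ t * M - t ^ p * P := by
  rcases le_or_gt P T with hPT | hTP
  · exact ⟨1, zero_le_one, le_rfl, by rw [one_rpow]; linarith⟩
  have hP0 : 0 < P := hT.trans hTP
  have hTP0 : 0 ≤ T / P := div_nonneg hT.le hP
  have htp : ((T / P) ^ (1 / p)) ^ p * P = T := by
    rw [← rpow_mul hTP0, one_div_mul_cancel hp.ne', rpow_one, div_mul_cancel₀ _ hP0.ne']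
  have htM : 2 * T ≤ (T / P) ^ (1 / p) * M := calc
    2 * T = (T / P) ^ (1 / p) * (2 * T ^ (1 - 1 / p) * P ^ (1 / p)) := by
      have hPp : P ^ (1 / p) ≠ 0 := (rpow_pos_of_pos hP0 _).ne'
      rw [div_rpow hT.le hP]
      field_simp
      rw [← rpow_add hT, ← add_div, add_sub_cancel, div_self hp.ne', rpow_one]
    _ ≤ (T / P) ^ (1 / p) * M := mul_le_mul_of_nonneg_left hMP (rpow_nonneg hTP0 _)
  exact ⟨(T / P) ^ (1 / p), rpow_nonneg hTP0 _,
    rpow_le_one hTP0 ((div_lt_one hP0).2 hTP).le (one_div_nonneg.2 hp.le), by linarith⟩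

-- Both sides are multiples of `ν^(1-1/p) / m^(1/q-1/p)`; the factors compare as
-- `2 / 128 ≤ 1/16 * 1/4` because `p ≥ 2` and `q ≥ 1`.
lemma two_mul_rpow_le {ν m p q : ℝ} (hν : 0 < ν) (hm : 0 < m) (hq : 1 ≤ q) (hp : 2 ≤ p) :
    2 * (1 / 16384 * ν * m ^ (-(p / (p - 1)) * (1 / q - 1 / p))) ^ (1 - 1 / p)
      ≤ (ν / 16) ^ (1 - 1 / q) * (1 / 4 * (ν / m) ^ (1 - q / p)) ^ (1 / q) := by
  have hq0 : q ≠ 0 := by positivity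
  have hp1 : p - 1 ≠ 0 := by linarith
  have hp0 : p ≠ 0 := by positivity
  set N := ν ^ (1 - 1 / p) / m ^ (1 / q - 1 / p)
  have hN : 0 ≤ N := by positivity
  have hlhs : (1 / 16384 * ν * m ^ (-(p / (p - 1)) * (1 / q - 1 / p))) ^ (1 - 1 / p)
      = (1 / 16384) ^ (1 - 1 / p) * N := by
    have hexp : -(p / (p - 1)) * (1 / q - 1 / p) * (1 - 1 / p) = -(1 / q - 1 / p) := by
      field_simp
    rw [mul_rpow (by positivity) (by positivity), mul_rpow (by norm_num) hν.le,
      ← rpow_mul hm.le, hexp, rpow_neg hm.le, mul_assoc, ← div_eq_mul_inv]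
  have hrhs : (ν / 16) ^ (1 - 1 / q) * (1 / 4 * (ν / m) ^ (1 - q / p)) ^ (1 / q)
      = (1 / 16) ^ (1 - 1 / q) * (1 / 4) ^ (1 / q) * N := by
    have hexp : (1 - q / p) * (1 / q) = 1 / q - 1 / p := by field_simp
    have hν' : ν ^ (1 - 1 / p) = ν ^ (1 - 1 / q) * ν ^ (1 / q - 1 / p) := by
      rw [← rpow_add hν]; ring_nf
    rw [mul_rpow (by norm_num) (by positivity), ← rpow_mul (by positivity), hexp,
      div_rpow hν.le hm.le, div_eq_mul_one_div ν 16, mul_rpow hν.le (by norm_num)]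
    simp only [N, hν']
    ring
  have hc : 2 * (1 / 16384 : ℝ) ^ (1 - 1 / p) ≤ (1 / 16) ^ (1 - 1 / q) * (1 / 4) ^ (1 / q) := by
    have h1 : (1 / 16384 : ℝ) ^ (1 - 1 / p) ≤ (1 / 16384) ^ (1 / 2 : ℝ) :=
      rpow_le_rpow_of_exponent_ge (by norm_num) (by norm_num) (by
        rw [le_sub_comm, div_le_iff₀ (by positivity)]; linarith)
    have h2 : (1 / 16 : ℝ) ^ (1 : ℝ) ≤ (1 / 16) ^ (1 - 1 / q) :=
      rpow_le_rpow_of_exponent_ge (by norm_num) (by norm_num) (by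
        have : 0 ≤ 1 / q := by positivity
        linarith)
    have h3 : (1 / 4 : ℝ) ^ (1 : ℝ) ≤ (1 / 4) ^ (1 / q) :=
      rpow_le_rpow_of_exponent_ge (by norm_num) (by norm_num) ((div_le_one (by positivity)).2 hq)
    have h4 : (1 / 16384 : ℝ) ^ (1 / 2 : ℝ) = 1 / 128 := by
      rw [show (1 / 16384 : ℝ) = (1 / 128) ^ (2 : ℝ) by norm_num, ← rpow_mul (by norm_num)]
      norm_num
    rw [rpow_one] at h2 h3
    nlinarith
  rw [hlhs, hrhs, ← mul_assoc]
  exact mul_le_mul_of_nonneg_right hc hN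

section Residual

variable {m : ℕ} (g r : Fin m → ℝ)

noncomputable def smoothedObjective (κ q : ℝ) (Δ : Fin m → ℝ) : ℝ :=
  (∑ e, g e * Δ e) + 2 * (∑ e, r e * Δ e ^ 2) + κ * ∑ e, |Δ e| ^ q

lemma res_smul (p c : ℝ) (Δ : Fin m → ℝ) :
    res g r p (fun e => c * Δ e) = c * ∑ e, g e * Δ e - 2 * c ^ 2 * ∑ e, r e * Δ e ^ 2
      - |c| ^ p * ∑ e, |Δ e| ^ p := by
  simp only [res, mul_sum, abs_mul, mul_rpow (abs_nonneg _) (abs_nonneg _)]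
  congr 2 <;> refine sum_congr rfl fun e _ => by ring

lemma smoothedObjective_neg_le (hm : 1 ≤ m) {p q ν : ℝ} (hq : 0 < q) (hqp : q ≤ p)
    (hν : 0 ≤ ν) (Δ : Fin m → ℝ) (hres : ν / 2 < res g r p Δ) :
    smoothedObjective g r (1 / 4 * (ν / m) ^ (1 - q / p)) q (-Δ) ≤ -ν / 4 := by
  have hamgm := rpow_mul_sum_rpow_le (a := fun e => |Δ e|) (fun e => abs_nonneg _)
    (div_nonneg hν (Nat.cast_nonneg m)) hq hqp
  rw [Fintype.card_fin, mul_div_cancel₀ _ (by positivity)] at hamgm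
  have hP : 0 ≤ ∑ e, |Δ e| ^ p := sum_nonneg fun e _ => rpow_nonneg (abs_nonneg _) p
  simp only [res] at hres
  simp only [smoothedObjective, Pi.neg_apply, mul_neg, neg_sq, abs_neg, sum_neg_distrib]
  linarith

lemma exists_res_smul_ge (hm : 1 ≤ m) (hr : ∀ e, 0 ≤ r e) {p q ν : ℝ} (hq : 2 ≤ q)
    (hqp : q ≤ p) (hν : 0 < ν) (Δ : Fin m → ℝ)
    (hΔ : smoothedObjective g r (1 / 4 * (ν / m) ^ (1 - q / p)) q Δ ≤ -ν / 16) :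
    ∃ c : ℝ, res g r p (fun e => c * Δ e)
      ≥ 1 / 16384 * ν * (m : ℝ) ^ (-(p / (p - 1)) * (1 / q - 1 / p)) := by
  have hm0 : (0 : ℝ) < m := by exact_mod_cast hm
  set κ := 1 / 4 * (ν / m) ^ (1 - q / p)
  set T := 1 / 16384 * ν * (m : ℝ) ^ (-(p / (p - 1)) * (1 / q - 1 / p))
  set P := ∑ e, |Δ e| ^ p
  set Q := ∑ e, |Δ e| ^ q
  have hκ : 0 ≤ κ := by positivity
  have hQ : 0 ≤ Q := sum_nonneg fun e _ => rpow_nonneg (abs_nonneg _) q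
  have hT : 0 < T := by positivity
  have hTν : T ≤ ν / 16384 := by
    have hexp : -(p / (p - 1)) * (1 / q - 1 / p) ≤ 0 :=
      mul_nonpos_of_nonpos_of_nonneg (neg_nonpos.2 (div_nonneg (by linarith) (by linarith)))
        (sub_nonneg.2 (one_div_le_one_div_of_le (by linarith) hqp))
    calc T ≤ 1 / 16384 * ν * 1 := mul_le_mul_of_nonneg_left
          (rpow_le_one_of_one_le_of_nonpos (by exact_mod_cast hm) hexp) (by positivity)
      _ = ν / 16384 := by ring
  have hMP : 2 * T ^ (1 - 1 / p) * P ^ (1 / p) ≤ ν / 16 + κ * Q := calc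
    2 * T ^ (1 - 1 / p) * P ^ (1 / p) ≤ (ν / 16) ^ (1 - 1 / q) * κ ^ (1 / q) * P ^ (1 / p) :=
      mul_le_mul_of_nonneg_right (two_mul_rpow_le hν hm0 (by linarith) (by linarith))
        (by positivity)
    _ ≤ (ν / 16) ^ (1 - 1 / q) * κ ^ (1 / q) * Q ^ (1 / q) := by
      gcongr
      exact rpow_sum_rpow_le (fun e => abs_nonneg _) (by linarith) hqp
    _ = (ν / 16) ^ (1 - 1 / q) * (κ * Q) ^ (1 / q) := by rw [mul_rpow hκ hQ, mul_assoc]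
    _ ≤ ν / 16 + κ * Q := rpow_one_sub_mul_rpow_le_add (by positivity) (by positivity)
      (by positivity) ((div_le_one (by linarith)).2 (by linarith))
  obtain ⟨t, ht0, ht1, hTt⟩ := exists_le_mul_sub_rpow_mul (by linarith : 0 < p) hT
    (sum_nonneg fun e _ => rpow_nonneg (abs_nonneg _) p)
    (by linarith [mul_nonneg hκ hQ]) hMP
  refine ⟨-t, ?_⟩
  have hS : 0 ≤ ∑ e, r e * Δ e ^ 2 := sum_nonneg fun e _ => mul_nonneg (hr e) (sq_nonneg _)
  have htΔ := mul_le_mul_of_nonneg_left hΔ ht0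
  simp only [smoothedObjective] at htΔ
  rw [res_smul, abs_neg, abs_of_nonneg ht0]
  linarith [mul_nonneg hS (mul_nonneg ht0 (sub_nonneg.2 ht1))]

end Residual

theorem stmt_10_general {n m : ℕ} (hm : 1 ≤ m) {p q : ℝ} (hq : 2 ≤ q) (hqp : q ≤ p)
    (A : Matrix (Fin n) (Fin m) ℝ) (g r : Fin m → ℝ) (hr : ∀ e, 0 ≤ r e)
    {ν : ℝ} (hν : 0 < ν) (Δs : Fin m → ℝ) (hAs : A.mulVec Δs = 0)
    (hlo : ν / 2 < res g r p Δs) :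
    (∃ Δ : Fin m → ℝ, A.mulVec Δ = 0 ∧
        (∑ e, g e * Δ e) + 2 * (∑ e, r e * Δ e ^ 2)
            + 1 / 4 * ((ν / (m : ℝ)) ^ (1 - q / p)) * (∑ e, |Δ e| ^ q) ≤ -ν / 4) ∧
      ∀ Δt : Fin m → ℝ, A.mulVec Δt = 0 →
        (∑ e, g e * Δt e) + 2 * (∑ e, r e * Δt e ^ 2)
            + 1 / 4 * ((ν / (m : ℝ)) ^ (1 - q / p)) * (∑ e, |Δt e| ^ q) ≤ -ν / 16 →
        ∃ c : ℝ, res g r p (fun e => c * Δt e)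
          ≥ 1 / 16384 * ν * (m : ℝ) ^ (-(p / (p - 1)) * (1 / q - 1 / p)) :=
  ⟨⟨-Δs, by rw [Matrix.mulVec_neg, hAs, neg_zero],
      smoothedObjective_neg_le g r hm (by linarith) hqp hν.le Δs hlo⟩,
    fun Δt _ hΔt => exists_res_smul_ge g r hm hr hq hqp hν Δt hΔt⟩

/-- Lemma 4.2, qSTOCoracle, case `q ≤ p`. -/
theorem stmt_10 {n m : ℕ} (hm : 1 ≤ m) {p q : ℝ} (hq : 2 ≤ q) (hqp : q ≤ p)
    (A : Matrix (Fin n) (Fin m) ℝ) (g r : Fin m → ℝ) (hr : ∀ e, 0 ≤ r e)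
    {ν : ℝ} (hν : 0 < ν) (Δs : Fin m → ℝ) (hAs : A.mulVec Δs = 0)
    (hmax : ∀ Δ, A.mulVec Δ = 0 → res g r p Δ ≤ res g r p Δs)
    (hlo : ν / 2 < res g r p Δs) (hhi : res g r p Δs ≤ ν) :
    (∃ Δ : Fin m → ℝ, A.mulVec Δ = 0 ∧
        (∑ e, g e * Δ e) + 2 * (∑ e, r e * Δ e ^ 2)
            + 1 / 4 * ((ν / (m : ℝ)) ^ (1 - q / p)) * (∑ e, |Δ e| ^ q) ≤ -ν / 4) ∧
      ∀ Δt : Fin m → ℝ, A.mulVec Δt = 0 →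
        (∑ e, g e * Δt e) + 2 * (∑ e, r e * Δt e ^ 2)
            + 1 / 4 * ((ν / (m : ℝ)) ^ (1 - q / p)) * (∑ e, |Δt e| ^ q) ≤ -ν / 16 →
        ∃ c : ℝ, res g r p (fun e => c * Δt e)
          ≥ 1 / 16384 * ν * (m : ℝ) ^ (-(p / (p - 1)) * (1 / q - 1 / p)) :=
  stmt_10_general hm hq hqp A g r hr hν Δs hAs hlo
end
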